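/- arXiv:1805.04626 — 3 statements merged into one kernel-verified Lean document; each statement's English description precedes it below -/
import Mathlib

section
/- Let τ > 0 and let λ ∈ Λ_τ, where Λ_τ := { λ ∈ ℂ : Re λ < 0, |Arg(λ)| > π/2, |λ| < (1/τ)(|Arg(λ)| − π/2) }. Then there is no real number ω such that iω = λ·exp(−iωτ); that is, the characteristic function s ↦ s − λe^{−sτ} has no purely imaginary zeros. -/
/-!
A purely imaginary root `iω` forces `l = iω e^{iωτ}`, so `‖l‖ = |ω|`; the bound defining `Λ_τ`
gives `|ω|τ < π/2`, and then `|arg l| = π/2 + |ω|τ` exactly. Thus `‖l‖ = (|arg l| - π/2)/τ`: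
`l` would lie on the boundary of `Λ_τ`, not inside it.
-/

open Real Complex ComplexConjugate

lemma Complex.abs_arg_conj (z : ℂ) : |arg (conj z)| = |arg z| := by
  rw [arg_conj]; split_ifs <;> simp [*]

lemma Complex.arg_I_mul_ofReal_mul_exp {x φ : ℝ} (hx : 0 < x) (hφ₀ : 0 ≤ φ) (hφ : φ ≤ π / 2) :
    arg (I * x * exp (φ * I)) = π / 2 + φ := by
  have hrot : I * x * exp (φ * I) = x * exp (↑(π / 2 + φ) * I) := by
    rw [ofReal_add, add_mul, exp_add, ofReal_div, ofReal_ofNat, exp_pi_div_two_mul_I]; ring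
  rw [hrot, arg_real_mul _ hx, arg_exp_mul_I, toIocMod_eq_self]
  constructor <;> linarith [pi_pos]

lemma Complex.abs_arg_I_mul_ofReal_mul_exp {ω τ : ℝ} (hω : ω ≠ 0) (hτ : 0 ≤ τ)
    (h : |ω| * τ ≤ π / 2) : |arg (I * ω * exp (I * ω * τ))| = π / 2 + |ω| * τ := by
  wlog hpos : 0 < ω generalizing ω
  · have hneg : 0 < -ω := neg_pos.2 ((not_lt.1 hpos).lt_of_ne hω)
    have hconj : I * ω * exp (I * ω * τ) = conj (I * ↑(-ω) * exp (I * ↑(-ω) * τ)) := by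
      simp only [map_mul, ← exp_conj, conj_I, map_neg, conj_ofReal, ofReal_neg]; ring_nf
    rw [hconj, abs_arg_conj, this (neg_ne_zero.2 hω) (by rwa [abs_neg]) hneg, abs_neg]
  have hφ : 0 ≤ ω * τ := mul_nonneg hpos.le hτ
  rw [abs_of_pos hpos] at h ⊢
  rw [show I * ω * τ = ↑(ω * τ) * I by push_cast; ring, arg_I_mul_ofReal_mul_exp hpos hφ h,
    abs_of_nonneg (by positivity)]

lemma Complex.norm_I_mul_ofReal_mul_exp (ω τ : ℝ) : ‖I * ω * exp (I * ω * τ)‖ = |ω| := by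
  simp [norm_exp]

theorem stmt_4 (τ : ℝ) (hτ : 0 < τ) (l : ℂ)
    (hl : l ∈ {l : ℂ | l.re < 0 ∧ Real.pi / 2 < |Complex.arg l| ∧
      ‖l‖ < (1 / τ) * (|Complex.arg l| - Real.pi / 2)}) :
    ¬ ∃ ω : ℝ, Complex.I * ω = l * Complex.exp (-(Complex.I * ω * τ)) := by
  obtain ⟨-, harg, hnorm⟩ := hl
  rintro ⟨ω, hω⟩
  have hl : l = I * ω * exp (I * ω * τ) := by
    symm
    nth_rw 1 [hω]
    rw [mul_assoc, ← Complex.exp_add, neg_add_cancel, Complex.exp_zero, mul_one]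
  have hω₀ : ω ≠ 0 := by
    rintro rfl
    simp [hl] at harg
    linarith [pi_pos]
  rw [show ‖l‖ = |ω| by rw [hl, norm_I_mul_ofReal_mul_exp]] at hnorm
  have hωτ : |ω| * τ < |arg l| - π / 2 := by
    rwa [← lt_div_iff₀ hτ, div_eq_inv_mul, ← one_div]
  have hωτ' : |ω| * τ ≤ π / 2 := by linarith [abs_arg_le_pi l]
  rw [hl, abs_arg_I_mul_ofReal_mul_exp hω₀ hτ.le hωτ'] at hωτ
  linarith
end

section
/- Let λ = |λ|e^{i(π/2 + ε)} with ε ∈ (0, π/2], τ > 0, and suppose |λ|τ < ε. Fix δ ∈ (0,1) with (1+δ)|λ|τ < ε, and set m := cos(ε − (1+δ)|λ|τ) ∈ [0,1). Then for every ω ∈ [(1−δ)|λ|, (1+δ)|λ|], one has |iω − λ·e^{−iωτ}|² ≥ (1 − m²)·|λ|², and consequently ∫_{(1−δ)|λ|}^{(1+δ)|λ|} dω/|iω − λe^{−iωτ}|² ≤ 2δ/((1 − m²)|λ|). -/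
/-!
Writing `l = |l| e^{i(π/2 + ε)}` gives `|iω - l e^{-iωτ}|² = ω² + |l|² - 2ω|l| cos(ε - ωτ)`.
On the given range of `ω` the angle `ε - ωτ` lies in `[ε - (1+δ)|l|τ, π/2]`, where cosine is
decreasing, so `cos(ε - ωτ) ≤ m` and completing the square leaves `(1 - m²)|l|²`.
The integral bound is the pointwise bound times the length `2δ|l|` of the interval.
-/

open Complex in
lemma norm_I_mul_sub_ofReal_mul_exp_sq (ω r θ : ℝ) :
    ‖I * ω - r * exp (I * θ)‖ ^ 2 = ω ^ 2 + r ^ 2 - 2 * ω * r * Real.sin θ := by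
  rw [mul_comm I (θ : ℂ), exp_mul_I, ← normSq_eq_norm_sq]
  simp only [normSq_apply, sub_re, mul_re, I_re, ofReal_re, zero_mul, I_im, ofReal_im, mul_zero,
    sub_self, add_re, cos_ofReal_re, sin_ofReal_re, sin_ofReal_im, mul_one, add_zero, add_im,
    cos_ofReal_im, mul_im, zero_add, sub_zero, zero_sub, mul_neg, neg_mul, neg_neg, sub_im, one_mul]
  nlinarith [Real.sin_sq_add_cos_sq θ]

open Complex in
lemma norm_I_mul_sub_mul_exp_neg_sq {l : ℂ} {ε : ℝ}
    (hl : l = (‖l‖ : ℂ) * exp (I * (Real.pi / 2 + ε))) (ω τ : ℝ) :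
    ‖I * ω - l * exp (-(I * ω * τ))‖ ^ 2
      = ω ^ 2 + ‖l‖ ^ 2 - 2 * ω * ‖l‖ * Real.cos (ε - ω * τ) := by
  have hrot : l * exp (-(I * ω * τ)) = ‖l‖ * exp (I * (ε - ω * τ + Real.pi / 2 : ℝ)) := by
    nth_rw 1 [hl]
    rw [mul_assoc, ← exp_add]
    push_cast
    ring_nf
  rw [hrot, norm_I_mul_sub_ofReal_mul_exp_sq, Real.sin_add_pi_div_two]

lemma one_sub_sq_mul_sq_le (ω r c m : ℝ) (hωr : 0 ≤ ω * r) (hc : c ≤ m) :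
    (1 - m ^ 2) * r ^ 2 ≤ ω ^ 2 + r ^ 2 - 2 * ω * r * c := by
  nlinarith [sq_nonneg (ω - m * r), mul_le_mul_of_nonneg_left hc hωr]

lemma integral_one_div_le_of_le {f : ℝ → ℝ} {a b C : ℝ} (hf : ContinuousOn f (Set.Icc a b))
    (hab : a ≤ b) (hC : 0 < C) (hle : ∀ x ∈ Set.Icc a b, C ≤ f x) :
    ∫ x in a..b, 1 / f x ≤ (b - a) / C := by
  have hint : IntervalIntegrable (fun x ↦ 1 / f x) MeasureTheory.volume a b := by
    refine ContinuousOn.intervalIntegrable ?_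
    rw [Set.uIcc_of_le hab]
    exact continuousOn_const.div hf fun x hx ↦ (hC.trans_le (hle x hx)).ne'
  calc ∫ x in a..b, 1 / f x ≤ ∫ _ in a..b, 1 / C :=
        intervalIntegral.integral_mono_on hab hint intervalIntegrable_const
          fun x hx ↦ one_div_le_one_div_of_le hC (hle x hx)
    _ = (b - a) / C := by simp [div_eq_mul_inv]

lemma one_sub_cos_sq_pos {x : ℝ} (h0 : 0 < x) (hπ : x < Real.pi) : 0 < 1 - Real.cos x ^ 2 := by
  rw [← Real.sin_sq]
  exact pow_pos (Real.sin_pos_of_pos_of_lt_pi h0 hπ) 2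

theorem stmt_15_general (l : ℂ) (ε τ δ m : ℝ) (hl : l ≠ 0)
    (hlarg : l = (‖l‖ : ℂ) * Complex.exp (Complex.I * (Real.pi / 2 + ε)))
    (hε : ε ∈ Set.Ioc (0 : ℝ) (Real.pi / 2)) (hτ : 0 < τ)
    (hδ : δ ∈ Set.Ioo (0 : ℝ) 1)
    (hδτ : (1 + δ) * (‖l‖ * τ) < ε)
    (hm : m = Real.cos (ε - (1 + δ) * (‖l‖ * τ))) :
    (∀ ω ∈ Set.Icc ((1 - δ) * ‖l‖) ((1 + δ) * ‖l‖),
      (1 - m ^ 2) * ‖l‖ ^ 2 ≤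
        ‖Complex.I * ω - l * Complex.exp (-(Complex.I * ω * τ))‖ ^ 2) ∧
    ∫ ω in ((1 - δ) * ‖l‖)..((1 + δ) * ‖l‖),
        1 / ‖Complex.I * ω - l * Complex.exp (-(Complex.I * ω * τ))‖ ^ 2 ≤
      2 * δ / ((1 - m ^ 2) * ‖l‖) := by
  set r := ‖l‖
  have hr : 0 < r := norm_pos_iff.mpr hl
  have hεπ := hε.2
  obtain ⟨hδ0, hδ1⟩ := hδ
  have hrτ : 0 < r * τ := mul_pos hr hτ
  have hm2 : 0 < 1 - m ^ 2 := by
    rw [hm]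
    exact one_sub_cos_sq_pos (by linarith) (by nlinarith [Real.pi_pos])
  have hpt : ∀ ω ∈ Set.Icc ((1 - δ) * r) ((1 + δ) * r),
      (1 - m ^ 2) * r ^ 2 ≤ ‖Complex.I * ω - l * Complex.exp (-(Complex.I * ω * τ))‖ ^ 2 := by
    rintro ω ⟨hω_lo, hω_hi⟩
    have hω : 0 ≤ ω := le_trans (by nlinarith) hω_lo
    have hcos : Real.cos (ε - ω * τ) ≤ m := by
      rw [hm]
      apply Real.cos_le_cos_of_nonneg_of_le_pi <;> nlinarith [Real.pi_pos]
    rw [norm_I_mul_sub_mul_exp_neg_sq hlarg]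
    exact one_sub_sq_mul_sq_le ω r _ m (by positivity) hcos
  refine ⟨hpt, ?_⟩
  calc _ ≤ ((1 + δ) * r - (1 - δ) * r) / ((1 - m ^ 2) * r ^ 2) :=
        integral_one_div_le_of_le (by fun_prop) (by nlinarith) (by positivity) hpt
    _ = 2 * δ / ((1 - m ^ 2) * r) := by field_simp; ring

theorem stmt_15 (l : ℂ) (ε τ δ m : ℝ) (hl : l ≠ 0)
    (hlarg : l = (‖l‖ : ℂ) * Complex.exp (Complex.I * (Real.pi / 2 + ε)))
    (hε : ε ∈ Set.Ioc (0 : ℝ) (Real.pi / 2)) (hτ : 0 < τ)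
    (hlt : ‖l‖ * τ < ε) (hδ : δ ∈ Set.Ioo (0 : ℝ) 1)
    (hδτ : (1 + δ) * (‖l‖ * τ) < ε)
    (hm : m = Real.cos (ε - (1 + δ) * (‖l‖ * τ))) :
    (∀ ω ∈ Set.Icc ((1 - δ) * ‖l‖) ((1 + δ) * ‖l‖),
      (1 - m ^ 2) * ‖l‖ ^ 2 ≤
        ‖Complex.I * ω - l * Complex.exp (-(Complex.I * ω * τ))‖ ^ 2) ∧
    ∫ ω in ((1 - δ) * ‖l‖)..((1 + δ) * ‖l‖),
        1 / ‖Complex.I * ω - l * Complex.exp (-(Complex.I * ω * τ))‖ ^ 2 ≤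
      2 * δ / ((1 - m ^ 2) * ‖l‖) :=
  stmt_15_general l ε τ δ m hl hlarg hε hτ hδ hδτ hm
end

section
/- Let τ > 0 and λ ∈ Λ_τ := { λ ∈ ℂ : Re λ < 0, |Arg λ| > π/2, |λ| < (1/τ)(|Arg λ| − π/2) }. Then the integral ∫_{−∞}^{∞} dω/|iω − λ·e^{−iωτ}|² is finite; more precisely there exist δ, m ∈ (0,1) such that it is bounded above by 2(2−δ)/(δ|λ|) + 4δ/((1−m²)|λ|). -/
/-!
Write `λ = r e^{iθ}`. Then `|iω - λ e^{-iωτ}|² = ω² + r² - 2 r ω sin (θ - ωτ)`. Away from the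
circle `|ω| = r` the reverse triangle inequality gives `|iω - λ e^{-iωτ}| ≥ ||ω| - r|`, and
`1 / (|ω| - r)²` integrates to `2 (2 - δ) / (δ r)` over `{||ω| - r| > δ r}`. On the band
`||ω| - r| ≤ δ r`, of length `4 δ r`, we have `|ωτ| ≤ (1 + δ) r τ < |θ| - π / 2`, so the angle
between `iω e^{iωτ}` and `λ` stays away from `0`: `ω sin (θ - ωτ) ≤ m |ω|` with
`m = sin (|θ| - (1 + δ) r τ) < 1`, whence `|iω - λ e^{-iωτ}|² ≥ (1 - m²) r²`.
-/

open Real Set MeasureTheory Filter Topology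

lemma mul_sin_sub_le_abs_mul_sin_sub {θ b t : ℝ} (hb : 0 ≤ b) (hθ : π / 2 + b < θ)
    (hθπ : θ ≤ π) (ht : |t| ≤ b) : t * sin (θ - t) ≤ |t| * sin (θ - b) := by
  obtain ⟨htb, hbt⟩ := abs_le.1 ht
  rcases le_or_gt 0 t with ht₀ | ht₀
  · rw [abs_of_nonneg ht₀]
    refine mul_le_mul_of_nonneg_left ?_ ht₀
    have hsin : sin ((θ - b - (θ - t)) / 2) ≤ 0 :=
      sin_nonpos_of_nonpos_of_neg_pi_le (by linarith) (by linarith)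
    have hcos : cos ((θ - b + (θ - t)) / 2) ≤ 0 :=
      cos_nonpos_of_pi_div_two_le_of_le (by linarith) (by linarith)
    nlinarith [sin_sub_sin (θ - b) (θ - t), mul_nonneg_of_nonpos_of_nonpos hsin hcos]
  · rw [abs_of_neg ht₀]
    have hsin : 0 ≤ sin ((θ - t + (θ - b)) / 2) :=
      sin_nonneg_of_nonneg_of_le_pi (by linarith) (by linarith)
    have hcos : 0 ≤ cos ((θ - t - (θ - b)) / 2) :=
      cos_nonneg_of_neg_pi_div_two_le_of_le (by linarith) (by linarith)
    nlinarith [sin_add_sin (θ - t) (θ - b), mul_nonneg hsin hcos]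

lemma mul_sin_sub_le_abs_mul_sin_abs_sub {θ b t : ℝ} (hb : 0 ≤ b) (hθ : π / 2 + b < |θ|)
    (hθπ : |θ| ≤ π) (ht : |t| ≤ b) : t * sin (θ - t) ≤ |t| * sin (|θ| - b) := by
  rcases le_or_gt 0 θ with hθ₀ | hθ₀
  · rw [abs_of_nonneg hθ₀] at *
    exact mul_sin_sub_le_abs_mul_sin_sub hb hθ hθπ ht
  · rw [abs_of_neg hθ₀] at *
    have h := mul_sin_sub_le_abs_mul_sin_sub (t := -t) hb hθ hθπ (by rwa [abs_neg])
    rw [abs_neg, show -θ - -t = -(θ - t) by ring, sin_neg] at h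
    linarith

lemma sin_mem_Ioo_zero_one {x : ℝ} (h₁ : π / 2 < x) (h₂ : x < π) : sin x ∈ Ioo 0 1 :=
  ⟨sin_pos_of_pos_of_lt_pi (by linarith [pi_pos]) h₂,
    by nlinarith [sin_le_one x, cos_sq' x, cos_neg_of_pi_div_two_lt_of_lt h₁ (by linarith)]⟩

lemma Complex.ne_zero_of_pi_div_two_lt_abs_arg {z : ℂ} (h : π / 2 < |z.arg|) : z ≠ 0 := by
  rintro rfl
  simp only [Complex.arg_zero, abs_zero] at h
  linarith [pi_pos]

/-- The characteristic function `s ↦ s - λ e^{-sτ}` of `x'(t) = λ x(t - τ)` at `s = iω`. -/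
noncomputable def delayChar (l : ℂ) (τ ω : ℝ) : ℂ :=
  Complex.I * ω - l * Complex.exp (-(Complex.I * ω * τ))

lemma continuous_delayChar (l : ℂ) (τ : ℝ) : Continuous (delayChar l τ) := by
  unfold delayChar
  fun_prop

lemma sq_norm_delayChar (l : ℂ) (τ ω : ℝ) :
    ‖delayChar l τ ω‖ ^ 2 = ω ^ 2 + ‖l‖ ^ 2 - 2 * ‖l‖ * (ω * sin (l.arg - ω * τ)) := by
  have hexp : Complex.exp (-(Complex.I * ω * τ)) = cos (ω * τ) - sin (ω * τ) * Complex.I := by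
    rw [show -(Complex.I * ω * τ) = ((-(ω * τ) : ℝ) : ℂ) * Complex.I by push_cast; ring,
      Complex.exp_mul_I, ← Complex.ofReal_cos, ← Complex.ofReal_sin, cos_neg, sin_neg]
    push_cast
    ring
  rw [delayChar, hexp, Complex.sq_norm, Complex.normSq_apply, sin_sub]
  simp only [Complex.sub_re, Complex.sub_im, Complex.mul_re, Complex.mul_im,
    Complex.I_re, Complex.I_im, Complex.ofReal_re, Complex.ofReal_im]
  rw [← Complex.norm_mul_cos_arg l, ← Complex.norm_mul_sin_arg l]
  linear_combination ‖l‖ ^ 2 * ((sin (ω * τ) ^ 2 + cos (ω * τ) ^ 2) * sin_sq_add_cos_sq l.arg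
    + sin_sq_add_cos_sq (ω * τ))

lemma abs_abs_sub_norm_le_norm_delayChar (l : ℂ) (τ ω : ℝ) :
    |(|ω| - ‖l‖)| ≤ ‖delayChar l τ ω‖ := by
  have h := abs_norm_sub_norm_le (Complex.I * ω) (l * Complex.exp (-(Complex.I * ω * τ)))
  rwa [norm_mul, norm_mul, Complex.norm_exp, Complex.norm_I, Complex.norm_real, Real.norm_eq_abs,
    show (-(Complex.I * ω * τ)).re = 0 by simp, Real.exp_zero, one_mul, mul_one] at h

lemma one_sub_sq_mul_sq_norm_le_sq_norm_delayChar {l : ℂ} {τ ω b : ℝ} (hτ : 0 < τ)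
    (hb : 0 ≤ b) (harg : π / 2 + b < |l.arg|) (hω : |ω| * τ ≤ b) :
    (1 - sin (|l.arg| - b) ^ 2) * ‖l‖ ^ 2 ≤ ‖delayChar l τ ω‖ ^ 2 := by
  set m := sin (|l.arg| - b)
  have hωτ : |ω * τ| ≤ b := by rwa [abs_mul, abs_of_pos hτ]
  have key := mul_sin_sub_le_abs_mul_sin_abs_sub hb harg (Complex.abs_arg_le_pi l) hωτ
  rw [abs_mul, abs_of_pos hτ] at key
  have hsin : ω * sin (l.arg - ω * τ) ≤ |ω| * m := le_of_mul_le_mul_right (by linarith) hτ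
  rw [sq_norm_delayChar]
  nlinarith [sq_nonneg (|ω| - m * ‖l‖), sq_abs ω,
    mul_le_mul_of_nonneg_left hsin (by positivity : (0 : ℝ) ≤ 2 * ‖l‖)]

lemma hasDerivAt_inv_sub {r x : ℝ} (hx : x ≠ r) :
    HasDerivAt (fun y => (r - y)⁻¹) ((x - r) ^ 2)⁻¹ x :=
  ((hasDerivAt_id' x).const_sub r).fun_inv (sub_ne_zero.2 hx.symm) |>.congr_deriv (by ring)

lemma integral_Ioo_inv_sq_sub {p q r : ℝ} (hpq : p ≤ q) (hqr : q < r) :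
    IntegrableOn (fun x => ((x - r) ^ 2)⁻¹) (Ioo p q) ∧
      ∫ x in Ioo p q, ((x - r) ^ 2)⁻¹ = (r - q)⁻¹ - (r - p)⁻¹ := by
  have hderiv : ∀ x ∈ uIcc p q, HasDerivAt (fun y => (r - y)⁻¹) ((x - r) ^ 2)⁻¹ x := by
    intro x hx
    rw [uIcc_of_le hpq] at hx
    exact hasDerivAt_inv_sub (by linarith [hx.2])
  have hcont : ContinuousOn (fun x => ((x - r) ^ 2)⁻¹) (Icc p q) :=
    ContinuousOn.inv₀ (by fun_prop) fun x hx => pow_ne_zero 2 (sub_ne_zero.2 (by linarith [hx.2]))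
  refine ⟨hcont.integrableOn_Icc.mono_set Ioo_subset_Icc_self, ?_⟩
  rw [← integral_Ioc_eq_integral_Ioo, ← intervalIntegral.integral_of_le hpq,
    intervalIntegral.integral_eq_sub_of_hasDerivAt hderiv (hcont.intervalIntegrable_of_Icc hpq)]

lemma integral_Ioi_inv_sq_sub {q r : ℝ} (hrq : r < q) :
    IntegrableOn (fun x => ((x - r) ^ 2)⁻¹) (Ioi q) ∧
      ∫ x in Ioi q, ((x - r) ^ 2)⁻¹ = (q - r)⁻¹ := by
  have hderiv : ∀ x ∈ Ici q, HasDerivAt (fun y => (r - y)⁻¹) ((x - r) ^ 2)⁻¹ x :=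
    fun x hx => hasDerivAt_inv_sub (by linarith [mem_Ici.1 hx])
  have hlim : Tendsto (fun y => (r - y)⁻¹) atTop (𝓝 0) :=
    (tendsto_atBot_add_const_left atTop r tendsto_neg_atTop_atBot).inv_tendsto_atBot
  have hint := integrableOn_Ioi_deriv_of_nonneg' hderiv (fun x _ => by positivity) hlim
  refine ⟨hint, ?_⟩
  rw [integral_Ioi_of_hasDerivAt_of_tendsto' hderiv hint hlim, zero_sub, ← inv_neg, neg_sub]

lemma integrable_comp_abs {g : ℝ → ℝ} (hg : IntegrableOn g (Ioi 0)) :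
    Integrable fun x => g |x| := by
  have hpos : IntegrableOn (fun x => g |x|) (Ioi 0) :=
    hg.congr_fun (fun x hx => by rw [abs_of_pos hx]) measurableSet_Ioi
  have hneg : IntegrableOn (fun x => g |x|) (Iic 0) := by
    have hemb : MeasurableEmbedding fun x : ℝ => -x := (Homeomorph.neg ℝ).measurableEmbedding
    rw [← Measure.map_neg_eq_self (volume : Measure ℝ), hemb.integrableOn_map_iff]
    simp_rw [Function.comp_def, abs_neg, neg_preimage, neg_Iic, neg_zero]
    exact (integrableOn_Ici_iff_integrableOn_Ioi).2 hpos
  rw [← integrableOn_univ, ← Iic_union_Ioi (a := (0 : ℝ))]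
  exact hneg.union hpos

noncomputable def nearFarBound (r ε C x : ℝ) : ℝ :=
  if |x - r| ≤ ε then C else ((x - r) ^ 2)⁻¹

lemma integral_nearFarBound {r ε : ℝ} (C : ℝ) (hε : 0 < ε) (hεr : ε < r) :
    IntegrableOn (nearFarBound r ε C) (Ioi 0) ∧
      ∫ x in Ioi 0, nearFarBound r ε C x = 2 * ε * C + 2 / ε - 1 / r := by
  obtain ⟨hint₁, hval₁⟩ := integral_Ioo_inv_sq_sub (r := r) (sub_pos.2 hεr).le (by linarith)
  obtain ⟨hint₃, hval₃⟩ := integral_Ioi_inv_sq_sub (show r < r + ε by linarith)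
  have heq₁ : EqOn (nearFarBound r ε C) (fun x => ((x - r) ^ 2)⁻¹) (Ioo 0 (r - ε)) :=
    fun x hx => if_neg (by rw [not_le, abs_sub_comm, lt_abs]; left; linarith [hx.2])
  have heq₂ : EqOn (nearFarBound r ε C) (fun _ => C) (Icc (r - ε) (r + ε)) :=
    fun x hx => if_pos (abs_sub_le_iff.2 ⟨by linarith [hx.2], by linarith [hx.1]⟩)
  have heq₃ : EqOn (nearFarBound r ε C) (fun x => ((x - r) ^ 2)⁻¹) (Ioi (r + ε)) :=
    fun x hx => if_neg (by rw [not_le, lt_abs]; left; linarith [mem_Ioi.1 hx])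
  have hint₁' := hint₁.congr_fun heq₁.symm measurableSet_Ioo
  have hint₂' : IntegrableOn (nearFarBound r ε C) (Icc (r - ε) (r + ε)) :=
    (integrableOn_const measure_Icc_lt_top.ne).congr_fun heq₂.symm measurableSet_Icc
  have hint₃' := hint₃.congr_fun heq₃.symm measurableSet_Ioi
  have hsplit : Ioi 0 = Ioo 0 (r - ε) ∪ (Icc (r - ε) (r + ε) ∪ Ioi (r + ε)) := by
    rw [Icc_union_Ioi_eq_Ici (by linarith), Ioo_union_Ici_eq_Ioi (by linarith)]
  have hdisj₂ : Disjoint (Icc (r - ε) (r + ε)) (Ioi (r + ε)) :=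
    (Iic_disjoint_Ioi le_rfl).mono_left Icc_subset_Iic_self
  have hdisj₁ : Disjoint (Ioo 0 (r - ε)) (Icc (r - ε) (r + ε) ∪ Ioi (r + ε)) := by
    rw [Icc_union_Ioi_eq_Ici (by linarith)]
    exact (Iio_disjoint_Ici le_rfl).mono_left Ioo_subset_Iio_self
  refine ⟨hsplit ▸ hint₁'.union (hint₂'.union hint₃'), ?_⟩
  rw [hsplit, setIntegral_union hdisj₁ (measurableSet_Icc.union measurableSet_Ioi) hint₁'
      (hint₂'.union hint₃'), setIntegral_union hdisj₂ measurableSet_Ioi hint₂' hint₃',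
    setIntegral_congr_fun measurableSet_Ioo heq₁, setIntegral_congr_fun measurableSet_Icc heq₂,
    setIntegral_congr_fun measurableSet_Ioi heq₃, hval₁, hval₃, setIntegral_const,
    Real.volume_real_Icc_of_le (by linarith), smul_eq_mul]
  field_simp [hε.ne']
  ring

lemma integrable_and_integral_le_of_le_nearFarBound {f : ℝ → ℝ} {r ε C : ℝ}
    (hf : AEStronglyMeasurable f) (hf₀ : ∀ ω, 0 ≤ f ω) (hε : 0 < ε) (hεr : ε < r)
    (hle : ∀ ω, f ω ≤ nearFarBound r ε C |ω|) :
    Integrable f ∧ ∫ ω, f ω ≤ 2 * (2 * ε * C + 2 / ε - 1 / r) := by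
  obtain ⟨hint, hval⟩ := integral_nearFarBound C hε hεr
  have hint' := integrable_comp_abs hint
  have hf_int : Integrable f :=
    hint'.mono hf (ae_of_all _ fun ω => by
      rw [Real.norm_of_nonneg (hf₀ ω)]
      exact (hle ω).trans (le_abs_self _))
  refine ⟨hf_int, ?_⟩
  rw [← hval, ← integral_comp_abs]
  exact integral_mono hf_int hint' hle

lemma inv_sq_norm_delayChar_le_nearFarBound {l : ℂ} {τ δ : ℝ} (hτ : 0 < τ) (hδ : 0 ≤ δ)
    (harg : π / 2 + (1 + δ) * (‖l‖ * τ) < |l.arg|) (ω : ℝ) :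
    1 / ‖delayChar l τ ω‖ ^ 2 ≤ nearFarBound ‖l‖ (δ * ‖l‖)
      (1 / ((1 - sin (|l.arg| - (1 + δ) * (‖l‖ * τ)) ^ 2) * ‖l‖ ^ 2)) |ω| := by
  set r := ‖l‖
  set b := (1 + δ) * (r * τ)
  have hb₀ : 0 ≤ b := by positivity
  have hr : 0 < r := norm_pos_iff.2 (Complex.ne_zero_of_pi_div_two_lt_abs_arg (by linarith))
  have hb : 0 < b := by positivity
  have hm := sin_mem_Ioo_zero_one (x := |l.arg| - b) (by linarith)
    (by linarith [Complex.abs_arg_le_pi l])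
  have hm₂ : 0 < 1 - sin (|l.arg| - b) ^ 2 := by nlinarith [hm.1, hm.2]
  unfold nearFarBound
  split_ifs with hnear
  · have hω : |ω| * τ ≤ b := by nlinarith [(abs_le.1 hnear).2]
    rw [one_div, one_div]
    exact inv_anti₀ (by positivity)
      (one_sub_sq_mul_sq_norm_le_sq_norm_delayChar hτ hb.le harg hω)
  · have hfar : 0 < |(|ω| - r)| := by
      have : 0 ≤ δ * r := by positivity
      linarith [not_le.1 hnear]
    rw [one_div, ← sq_abs (|ω| - r)]
    exact inv_anti₀ (by positivity)
      (pow_le_pow_left₀ hfar.le (abs_abs_sub_norm_le_norm_delayChar l τ ω) 2)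

lemma exists_one_add_mul_lt {c d : ℝ} (hc : 0 < c) (hcd : c < d) :
    ∃ δ ∈ Ioo (0 : ℝ) 1, (1 + δ) * c < d :=
  ⟨(d - c) / (d + c), ⟨div_pos (by linarith) (by linarith),
    (div_lt_one (by linarith)).2 (by linarith)⟩, by
    rw [← lt_div_iff₀ hc, one_add_div (by linarith), div_lt_div_iff₀ (by linarith) hc]
    nlinarith⟩

theorem stmt_16 (τ : ℝ) (hτ : 0 < τ) (l : ℂ)
    (hl : l ∈ {l : ℂ | l.re < 0 ∧ Real.pi / 2 < |Complex.arg l| ∧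
      ‖l‖ < (1 / τ) * (|Complex.arg l| - Real.pi / 2)}) :
    ∃ δ ∈ Set.Ioo (0 : ℝ) 1, ∃ m ∈ Set.Ioo (0 : ℝ) 1,
      MeasureTheory.Integrable
        (fun ω : ℝ =>
          1 / ‖Complex.I * ω - l * Complex.exp (-(Complex.I * ω * τ))‖ ^ 2) ∧
      ∫ ω : ℝ,
          1 / ‖Complex.I * ω - l * Complex.exp (-(Complex.I * ω * τ))‖ ^ 2 ≤
        2 * (2 - δ) / (δ * ‖l‖) + 4 * δ / ((1 - m ^ 2) * ‖l‖) := by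
  obtain ⟨-, harg, hlτ⟩ := hl
  have hr : 0 < ‖l‖ := norm_pos_iff.2 (Complex.ne_zero_of_pi_div_two_lt_abs_arg harg)
  have hcd : ‖l‖ * τ < |l.arg| - π / 2 := by rwa [one_div_mul_eq_div, lt_div_iff₀ hτ] at hlτ
  obtain ⟨δ, hδ, hbd⟩ := exists_one_add_mul_lt (by positivity) hcd
  have hb : 0 < (1 + δ) * (‖l‖ * τ) := mul_pos (by linarith [hδ.1]) (mul_pos hr hτ)
  set m := sin (|l.arg| - (1 + δ) * (‖l‖ * τ)) with hm_def
  have hm : m ∈ Ioo 0 1 :=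
    sin_mem_Ioo_zero_one (by linarith) (by linarith [Complex.abs_arg_le_pi l])
  refine ⟨δ, hδ, m, hm, ?_⟩
  obtain ⟨hint, hle⟩ := integrable_and_integral_le_of_le_nearFarBound
    (f := fun ω => 1 / ‖delayChar l τ ω‖ ^ 2)
    (((continuous_delayChar l τ).norm.pow 2).measurable.const_div 1).aestronglyMeasurable
    (fun ω => by positivity) (mul_pos hδ.1 hr) (by nlinarith [hδ.2])
    (inv_sq_norm_delayChar_le_nearFarBound hτ hδ.1.le (by linarith))
  rw [← hm_def] at hle
  refine ⟨hint, hle.trans_eq ?_⟩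
  have : 1 - m ^ 2 ≠ 0 := by nlinarith [hm.1, hm.2]
  field_simp [hδ.1.ne']
  ring
end
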